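/- For every real number α ≥ 0 and all integers s ≥ 1 and x ≥ 1, S_{8,s,x}^{(α)} = ∑_{r=0}^{s} ∑_{p=0}^{s} ∑_{w=0}^{s} ∑_{n=0}^{r+1} ∑_{k=1}^{x+1−n} ( C(x+1−n−k+r, r) · C(r,n) − C(x+2−n−k+r, r+1) · C(r+1,n) ) · C_{8,s}(r,p,n,w) · B_{s−r,p+2}(w+α−1; k), where S_{8,s,x}^{(α)} is the coefficient of q^x in ∑_{i=1}^{x+1} i^{α−1} · Σ_{8,s}(q,i). -/

import Mathlib

open PowerSeries Finset

/-- Generalized sum-of-divisors function `σ_α(n) = ∑_{d ∣ n} d^α` (real powers). -/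
noncomputable def sigma' (α : ℝ) (n : ℕ) : ℝ := ∑ d ∈ n.divisors, (d : ℝ) ^ α

/-- Bounded-divisor sum `σ_{α,m}(n) = ∑_{d ∣ n, d ≤ ⌊n/m⌋} d^α`. -/
noncomputable def sigmaB (α : ℝ) (m n : ℕ) : ℝ :=
  ∑ d ∈ n.divisors.filter (fun d => d ≤ n / m), (d : ℝ) ^ α

/-- Binomial-convolution divisor sum
`B_{k,m}(β; n) = ∑_{d ∣ n, d ≤ ⌊n/m⌋} C(n/d - m + k, k) d^β`. -/
noncomputable def Bfun (k m : ℕ) (β : ℝ) (n : ℕ) : ℝ :=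
  ∑ d ∈ n.divisors.filter (fun d => d ≤ n / m),
    ((n / d - m + k).choose k : ℝ) * (d : ℝ) ^ β

/-- Unsigned Stirling numbers of the first kind. -/
def stirling1 : ℕ → ℕ → ℕ
  | 0, 0 => 1
  | 0, _ + 1 => 0
  | _ + 1, 0 => 0
  | s + 1, m + 1 => s * stirling1 s (m + 1) + stirling1 s m

/-- Stirling numbers of the second kind. -/
def stirling2 : ℕ → ℕ → ℕ
  | 0, 0 => 1
  | 0, _ + 1 => 0
  | _ + 1, 0 => 0
  | m + 1, k + 1 => (k + 1) * stirling2 m (k + 1) + stirling2 m k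

/-- Binomial coefficient `C(z, j) = z(z-1)⋯(z-j+1)/j!` with integer top argument. -/
noncomputable def zchoose (z : ℤ) (j : ℕ) : ℝ :=
  (∏ i ∈ Finset.range j, ((z : ℝ) - (i : ℝ))) / (j.factorial : ℝ)

/-- Binomial coefficient `C(a, b)` with natural top and integer bottom argument,
zero when `b < 0`. -/
noncomputable def nchooseZ (a : ℕ) (b : ℤ) : ℝ :=
  if 0 ≤ b then (a.choose b.toNat : ℝ) else 0

/-- The coefficients `C_{4,s}(r,p,m)`. -/
noncomputable def C4 (s r p m : ℕ) : ℝ :=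
  ∑ k ∈ Finset.range (m + 1),
    (s.choose r : ℝ) * (stirling1 (s - r) m : ℝ) * (stirling2 m k : ℝ) *
      zchoose ((s : ℤ) - r - k) p * (-1 : ℝ) ^ ((s : ℤ) - r - k + p) *
      (k.factorial : ℝ) * (r.factorial : ℝ)

/-- The coefficients `C_{8,s}(r,p,n,w)`. -/
noncomputable def C8 (s r p n w : ℕ) : ℝ :=
  ∑ m ∈ Finset.range (s - r + 1), ∑ k ∈ Finset.range (m + 1),
    ∑ m1 ∈ Finset.range (r + 1 - n + 1), ∑ m2 ∈ Finset.range (n + 1),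
      (s.choose r : ℝ) * (stirling1 (s - r) m : ℝ) * (stirling2 m k : ℝ) *
        zchoose ((s : ℤ) - r - k) p * (stirling1 (r + 1 - n) m1 : ℝ) *
        (stirling1 n m2 : ℝ) * nchooseZ m2 ((w : ℤ) - m - m1) *
        (-1 : ℝ) ^ (s - k + p + n + m1 + m2) * (k.factorial : ℝ) *
        (((n : ℤ) - 2 - r : ℤ) : ℝ) ^ ((m : ℤ) + m1 + m2 - w)

/-- The component power series `Σ_{4,s}(q,i)` (formal power series over `ℝ`). -/
noncomputable def Sigma4 (s i : ℕ) : PowerSeries ℝ :=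
  ∑ r ∈ Finset.range (s + 1), ∑ p ∈ Finset.range (s + 1), ∑ m ∈ Finset.range (s + 1),
    PowerSeries.C (C4 s r p m) * X ^ ((p + 1) * i + r) * ((1 - X ^ i)⁻¹) ^ (s - r + 1) *
      (PowerSeries.C ((i : ℝ) ^ (m + 1)) * ((1 - X)⁻¹) ^ (r + 1) -
        PowerSeries.C (((r : ℝ) + 1) * (i : ℝ) ^ m) * ((1 - X)⁻¹) ^ (r + 2))

/-- The component power series `Σ_{8,s}(q,i)` (formal power series over `ℝ`). -/
noncomputable def Sigma8 (s i : ℕ) : PowerSeries ℝ :=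
  ∑ r ∈ Finset.range (s + 1), ∑ p ∈ Finset.range (s + 1),
    ∑ n ∈ Finset.range (r + 2), ∑ w ∈ Finset.range (s + 1),
      PowerSeries.C (C8 s r p n w * (i : ℝ) ^ w) * X ^ ((p + 2) * i + n - 1) *
        ((1 - X ^ i)⁻¹) ^ (s - r + 1) *
        (PowerSeries.C (r.choose n : ℝ) * ((1 - X)⁻¹) ^ (r + 1) -
          PowerSeries.C ((r + 1).choose n : ℝ) * ((1 - X)⁻¹) ^ (r + 2))

/-- `S_{4,s,x}^{(α)}`: the coefficient of `q^x` in `∑_{i=1}^{max(x,1)} i^{α-1} Σ_{4,s}(q,i)`. -/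
noncomputable def S4c (α : ℝ) (s x : ℕ) : ℝ :=
  PowerSeries.coeff x
    (∑ i ∈ Finset.Icc 1 (max x 1), PowerSeries.C ((i : ℝ) ^ (α - 1)) * Sigma4 s i)

/-- `S_{8,s,x}^{(α)}`: the coefficient of `q^x` in `∑_{i=1}^{x+1} i^{α-1} Σ_{8,s}(q,i)`. -/
noncomputable def S8c (α : ℝ) (s x : ℕ) : ℝ :=
  PowerSeries.coeff x
    (∑ i ∈ Finset.Icc 1 (x + 1), PowerSeries.C ((i : ℝ) ^ (α - 1)) * Sigma8 s i)

/-! The substitution `q ↦ q^i` turns `(1 - q)^{-(t+1)} = ∑ C(t + b, t) q^b` into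
`(1 - q^i)^{-(t+1)}`, so `∑_i i^β q^{m i} (1 - q^i)^{-(t+1)}` is the generating function of
`B_{t,m}(β; ·)`. Multiplying by `q` (which also removes the truncated `- 1` in the exponent of
`Σ_{8,s}`), every summand of `q · ∑_i i^{α-1} Σ_{8,s}(q,i)` becomes `q^n` times the series
`C(r,n)(1-q)^{-(r+1)} - C(r+1,n)(1-q)^{-(r+2)}`, whose coefficients are binomial, times such a
generating function; the claim is the resulting Cauchy product. -/

theorem zchoose_natCast (N r : ℕ) : zchoose N r = N.choose r := by
  rw [zchoose, Int.cast_natCast, ← descPochhammer_eval_eq_prod_range,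
    descPochhammer_eval_eq_descFactorial, Nat.descFactorial_eq_factorial_mul_choose, Nat.cast_mul,
    mul_div_cancel_left₀ _ (by positivity)]

theorem Bfun_zero (t m : ℕ) (β : ℝ) : Bfun t m β 0 = 0 := by
  simp [Bfun]

theorem divisors_filter_le_div_eq {m n N : ℕ} (hm : 0 < m) (hn : n ≤ N) :
    n.divisors.filter (· ≤ n / m) = (Icc 1 N).filter (fun d => d ∣ n ∧ m * d ≤ n) := by
  ext d
  simp only [mem_filter, Nat.mem_divisors, mem_Icc, Nat.le_div_iff_mul_le hm]
  constructor
  · rintro ⟨⟨hd, hn0⟩, hdm⟩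
    have := Nat.le_of_dvd (Nat.pos_of_ne_zero hn0) hd
    have := Nat.pos_of_dvd_of_pos hd (Nat.pos_of_ne_zero hn0)
    exact ⟨⟨by omega, by omega⟩, hd, by linarith⟩
  · rintro ⟨⟨hd1, -⟩, hd, hdm⟩
    exact ⟨⟨hd, by nlinarith⟩, by linarith⟩

namespace PowerSeries

theorem coeff_mul_eq_sum_Icc_of_coeff_zero {R : Type*} [CommSemiring R] {ψ : R⟦X⟧}
    (hψ : coeff 0 ψ = 0) (φ : R⟦X⟧) (n : ℕ) :
    coeff n (φ * ψ) = ∑ k ∈ Icc 1 n, coeff (n - k) φ * coeff k ψ := by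
  rw [mul_comm, coeff_mul,
    Nat.sum_antidiagonal_eq_sum_range_succ (fun k a => coeff k ψ * coeff a φ), range_eq_Ico,
    sum_eq_sum_Ico_succ_bot n.succ_pos, hψ, zero_mul, zero_add, Nat.succ_eq_add_one,
    Ico_add_one_right_eq_Icc]
  exact sum_congr rfl fun k _ => mul_comm _ _

variable {k : Type*} [Field k]

theorem inv_one_sub_pow_succ_eq_mk (t : ℕ) :
    ((1 - X : k⟦X⟧)⁻¹) ^ (t + 1) = mk fun n => ((t + n).choose t : k) := by
  refine left_inv_eq_right_inv (a := (1 - X : k⟦X⟧) ^ (t + 1)) ?_ ?_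
  · rw [← mul_pow, PowerSeries.inv_mul_cancel _ (by simp), one_pow]
  · rw [← invOneSubPow_val_succ_eq_mk_add_choose, ← invOneSubPow_inv_eq_one_sub_pow]
    exact (invOneSubPow k (t + 1)).inv_val

theorem expand_inv_one_sub_X {i : ℕ} (hi : i ≠ 0) :
    expand i hi ((1 - X : k⟦X⟧)⁻¹) = (1 - X ^ i)⁻¹ := by
  have h : (1 - X ^ i : k⟦X⟧) = expand i hi (1 - X) := by simp
  rw [eq_inv_iff_mul_eq_one (by simp [hi]), h, ← map_mul, PowerSeries.inv_mul_cancel _ (by simp),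
    map_one]

theorem coeff_X_pow_mul_inv_one_sub_X_pow_pow {i : ℕ} (hi : i ≠ 0) (m t n : ℕ) :
    coeff n (X ^ (m * i) * ((1 - X ^ i : k⟦X⟧)⁻¹) ^ (t + 1)) =
      if i ∣ n ∧ m * i ≤ n then ((n / i - m + t).choose t : k) else 0 := by
  rw [← expand_inv_one_sub_X hi, ← map_pow, inv_one_sub_pow_succ_eq_mk, coeff_X_pow_mul',
    coeff_expand]
  by_cases hmn : m * i ≤ n
  · by_cases hin : i ∣ n
    · obtain ⟨q, rfl⟩ := hin
      have hsub : i * q - m * i = i * (q - m) := by rw [Nat.mul_sub, mul_comm m i]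
      simp [hmn, hsub, coeff_mk, Nat.mul_div_cancel_left _ (Nat.pos_of_ne_zero hi), add_comm]
    · have hin' : ¬ i ∣ n - m * i :=
        fun h => hin ((Nat.dvd_sub_iff_left hmn (dvd_mul_left i m)).mp h)
      simp [hmn, hin, hin']
  · simp [hmn]

end PowerSeries

noncomputable def chooseDiffSeries (r n : ℕ) : ℝ⟦X⟧ :=
  C (r.choose n : ℝ) * ((1 - X)⁻¹) ^ (r + 1) -
    C ((r + 1).choose n : ℝ) * ((1 - X)⁻¹) ^ (r + 2)

theorem coeff_chooseDiffSeries (r n a : ℕ) :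
    coeff a (chooseDiffSeries r n) =
      r.choose n * (r + a).choose r - (r + 1).choose n * (r + 1 + a).choose (r + 1) := by
  simp only [chooseDiffSeries, map_sub, coeff_C_mul, inv_one_sub_pow_succ_eq_mk, coeff_mk]

noncomputable def binomialDivisorSeries (t m : ℕ) (β : ℝ) (N : ℕ) : ℝ⟦X⟧ :=
  ∑ i ∈ Icc 1 N, C ((i : ℝ) ^ β) * (X ^ (m * i) * ((1 - X ^ i)⁻¹) ^ (t + 1))

theorem coeff_binomialDivisorSeries {t m N n : ℕ} (β : ℝ) (hm : 0 < m) (hn : n ≤ N) :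
    coeff n (binomialDivisorSeries t m β N) = Bfun t m β n := by
  rw [binomialDivisorSeries, Bfun, divisors_filter_le_div_eq hm hn, sum_filter, map_sum]
  refine sum_congr rfl fun i hi => ?_
  rw [coeff_C_mul, coeff_X_pow_mul_inv_one_sub_X_pow_pow (by simp at hi; omega)]
  split_ifs <;> ring

theorem coeff_X_pow_mul_chooseDiffSeries_mul_binomialDivisorSeries (x r n t m : ℕ) (β : ℝ)
    (hm : 0 < m) :
    coeff (x + 1) (X ^ n * (chooseDiffSeries r n * binomialDivisorSeries t m β (x + 1))) =
      ∑ k ∈ Icc 1 (x + 1 - n),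
        (zchoose ((x : ℤ) + 1 - n - k + r) r * (r.choose n : ℝ) -
          zchoose ((x : ℤ) + 2 - n - k + r) (r + 1) * ((r + 1).choose n : ℝ)) *
          Bfun t m β k := by
  have hL0 : coeff 0 (binomialDivisorSeries t m β (x + 1)) = 0 := by
    rw [coeff_binomialDivisorSeries β hm (Nat.zero_le _), Bfun_zero]
  rw [coeff_X_pow_mul']
  split_ifs with hn
  · rw [coeff_mul_eq_sum_Icc_of_coeff_zero hL0]
    refine sum_congr rfl fun k hk => ?_
    obtain ⟨hk1, hkx⟩ := mem_Icc.mp hk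
    have h₁ : (x : ℤ) + 1 - n - k + r = ((r + (x + 1 - n - k) : ℕ) : ℤ) := by
      push_cast; omega
    have h₂ : (x : ℤ) + 2 - n - k + r = ((r + 1 + (x + 1 - n - k) : ℕ) : ℤ) := by
      push_cast; omega
    rw [coeff_chooseDiffSeries, coeff_binomialDivisorSeries β hm (by omega), h₁, h₂,
      zchoose_natCast, zchoose_natCast]
    ring
  · rw [Nat.sub_eq_zero_of_le (by omega), Icc_eq_empty (by omega), sum_empty]

theorem X_mul_sum_rpow_mul_Sigma8 (α : ℝ) (s N : ℕ) :
    X * ∑ i ∈ Icc 1 N, C ((i : ℝ) ^ (α - 1)) * Sigma8 s i =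
      ∑ r ∈ range (s + 1), ∑ p ∈ range (s + 1), ∑ w ∈ range (s + 1),
        ∑ n ∈ range (r + 2), C (C8 s r p n w) * (X ^ n * (chooseDiffSeries r n *
          binomialDivisorSeries (s - r) (p + 2) ((w : ℝ) + α - 1) N)) := by
  have term : ∀ i ∈ Icc 1 N, ∀ r p n w : ℕ,
      (X : ℝ⟦X⟧) * (C ((i : ℝ) ^ (α - 1)) * (C (C8 s r p n w * (i : ℝ) ^ w) *
        X ^ ((p + 2) * i + n - 1) * ((1 - X ^ i)⁻¹) ^ (s - r + 1) * chooseDiffSeries r n)) =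
      C (C8 s r p n w) * (X ^ n * (chooseDiffSeries r n * (C ((i : ℝ) ^ ((w : ℝ) + α - 1)) *
        (X ^ ((p + 2) * i) * ((1 - X ^ i)⁻¹) ^ (s - r + 1))))) := by
    intro i hi r p n w
    replace hi : 0 < i := (mem_Icc.mp hi).1
    have hX : (X : ℝ⟦X⟧) * X ^ ((p + 2) * i + n - 1) = X ^ n * X ^ ((p + 2) * i) := by
      have : 1 ≤ (p + 2) * i := Nat.one_le_iff_ne_zero.mpr (by positivity)
      rw [← pow_succ', ← pow_add]
      congr 1
      omega
    have hC : C ((i : ℝ) ^ (α - 1)) * C (C8 s r p n w * (i : ℝ) ^ w) =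
        C (C8 s r p n w) * C ((i : ℝ) ^ ((w : ℝ) + α - 1)) := by
      rw [← map_mul, ← map_mul, add_sub_assoc, Real.rpow_add (by positivity), Real.rpow_natCast]
      ring_nf
    calc _ = C ((i : ℝ) ^ (α - 1)) * C (C8 s r p n w * (i : ℝ) ^ w) *
          (X * X ^ ((p + 2) * i + n - 1)) * ((1 - X ^ i)⁻¹) ^ (s - r + 1) *
          chooseDiffSeries r n := by ring
      _ = _ := by rw [hC, hX]; ring
  simp only [Sigma8, ← chooseDiffSeries.eq_1, binomialDivisorSeries, mul_sum]
  refine sum_comm.trans (sum_congr rfl fun r _ => sum_comm.trans (sum_congr rfl fun p _ =>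
    sum_comm_cycle.trans (sum_congr rfl fun w _ => sum_comm.trans (sum_congr rfl fun n _ =>
      sum_congr rfl fun i hi => term i hi r p n w))))

theorem S8_eq_binomial_divisor_sums_general (α : ℝ) (s x : ℕ) :
    S8c α s x =
      ∑ r ∈ Finset.range (s + 1), ∑ p ∈ Finset.range (s + 1),
        ∑ w ∈ Finset.range (s + 1), ∑ n ∈ Finset.range (r + 2),
          ∑ k ∈ Finset.Icc 1 (x + 1 - n),
            (zchoose ((x : ℤ) + 1 - n - k + r) r * (r.choose n : ℝ) -
              zchoose ((x : ℤ) + 2 - n - k + r) (r + 1) * ((r + 1).choose n : ℝ)) *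
              C8 s r p n w * Bfun (s - r) (p + 2) ((w : ℝ) + α - 1) k := by
  rw [S8c, ← coeff_succ_X_mul, X_mul_sum_rpow_mul_Sigma8]
  simp only [map_sum, coeff_C_mul,
    coeff_X_pow_mul_chooseDiffSeries_mul_binomialDivisorSeries _ _ _ _ _ _ (Nat.succ_pos _),
    mul_sum]
  refine sum_congr rfl fun r _ => sum_congr rfl fun p _ => sum_congr rfl fun w _ =>
    sum_congr rfl fun n _ => sum_congr rfl fun k _ => by ring

/-- Corollary, part (ii): relation of `S_{8,s,x}^{(α)}` to the
binomial divisor sums `B_{k,m}(β; n)`. -/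
theorem S8_eq_binomial_divisor_sums (α : ℝ) (hα : 0 ≤ α) (s x : ℕ)
    (hs : 1 ≤ s) (hx : 1 ≤ x) :
    S8c α s x =
      ∑ r ∈ Finset.range (s + 1), ∑ p ∈ Finset.range (s + 1),
        ∑ w ∈ Finset.range (s + 1), ∑ n ∈ Finset.range (r + 2),
          ∑ k ∈ Finset.Icc 1 (x + 1 - n),
            (zchoose ((x : ℤ) + 1 - n - k + r) r * (r.choose n : ℝ) -
              zchoose ((x : ℤ) + 2 - n - k + r) (r + 1) * ((r + 1).choose n : ℝ)) *
              C8 s r p n w * Bfun (s - r) (p + 2) ((w : ℝ) + α - 1) k :=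
  S8_eq_binomial_divisor_sums_general α s x
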